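/- arXiv:1704.01101 — 3 statements merged into one kernel-verified Lean document; each statement's English description precedes it below -/
import Mathlib

section
/- Let d_AB be a martingale. Define d_B(λ) = 1 and, for nonempty σ of length n, d_B(σ) = 2^{-n} · Σ_{τ ∈ Σ^n} d_AB(τ ⊎ σ), where τ ⊎ σ denotes the length-2n interleaving τ₀σ₀…τ_{n-1}σ_{n-1}. Then d_B is a martingale. -/
/-- Interleaving of two strings, taking bits alternately starting with the first list:
`ilv σ τ = σ₀τ₀σ₁τ₁…`. -/
def ilv : List Bool → List Bool → List Bool
  | [], τ => τ
  | a :: σ, τ => a :: ilv τ σ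
termination_by σ τ => σ.length + τ.length
decreasing_by simp; omega

def IsMartingale (d : List Bool → ℝ) : Prop :=
  (∀ σ, 0 ≤ d σ) ∧ d [] = 1 ∧ ∀ σ, d (σ ++ [false]) + d (σ ++ [true]) = 2 * d σ

/-!
Appending one bit to each side commutes with interleaving:
`ilv (τ ++ [a]) (σ ++ [b]) = ilv τ σ ++ [a, b]`. Hence the two sums `Σ_τ d_AB (ilv τ (σ ++ [b]))`,
`b ∈ {0, 1}`, together run over the four grandchildren of every `ilv τ σ`, which contribute
`4 · d_AB (ilv τ σ)` by two applications of the martingale equation. Against the normalisations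
`2^{-(n+1)}` and `2^{-n}` this is the martingale equation for `d_B`.
-/

theorem Fintype.sum_ofFn_succ {α M : Type*} [Fintype α] [AddCommMonoid M] (n : ℕ)
    (f : List α → M) :
    ∑ v : Fin (n + 1) → α, f (List.ofFn v) = ∑ u : Fin n → α, ∑ a, f (List.ofFn u ++ [a]) := by
  rw [← (Fin.snocEquiv fun _ => α).sum_comp, Fintype.sum_prod_type, Finset.sum_comm]
  simp only [Fin.snocEquiv_apply, List.ofFn_succ_last, Fin.snoc_castSucc, Fin.snoc_last]

theorem ilv_append {τ σ : List Bool} (h : τ.length = σ.length) (τ' σ' : List Bool) :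
    ilv (τ ++ τ') (σ ++ σ') = ilv τ σ ++ ilv τ' σ' := by
  induction τ generalizing σ with
  | nil => simp [List.eq_nil_of_length_eq_zero h.symm, ilv]
  | cons a τ ih =>
    cases σ with
    | nil => simp at h
    | cons b σ => simp [ilv, ih (by simpa using h)]

section

variable (d : List Bool → ℝ)

def ilvSum (σ : List Bool) : ℝ :=
  ∑ τ : Fin σ.length → Bool, d (ilv (List.ofFn τ) σ)

noncomputable def ilvAvg (σ : List Bool) : ℝ :=
  ((2 : ℝ) ^ σ.length)⁻¹ * ilvSum d σ

theorem ilvSum_nil : ilvSum d [] = d [] := by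
  simp [ilvSum, ilv]

theorem ilvSum_snoc (σ : List Bool) (b : Bool) :
    ilvSum d (σ ++ [b]) = ∑ τ : Fin σ.length → Bool, ∑ a, d (ilv (List.ofFn τ) σ ++ [a, b]) := by
  rw [ilvSum, List.length_append, List.length_singleton,
    Fintype.sum_ofFn_succ _ fun τ => d (ilv τ (σ ++ [b]))]
  simp [ilv_append, ilv]

variable {d}

theorem sum_append_pair_eq (hd : ∀ σ, d (σ ++ [false]) + d (σ ++ [true]) = 2 * d σ)
    (w : List Bool) : ∑ a, (d (w ++ [a, false]) + d (w ++ [a, true])) = 4 * d w := by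
  have hpair (a : Bool) : d (w ++ [a, false]) + d (w ++ [a, true]) = 2 * d (w ++ [a]) := by
    simpa using hd (w ++ [a])
  simp only [hpair, Fintype.sum_bool]
  linarith [hd w]

theorem ilvSum_snoc_false_add_true (hd : ∀ σ, d (σ ++ [false]) + d (σ ++ [true]) = 2 * d σ)
    (σ : List Bool) : ilvSum d (σ ++ [false]) + ilvSum d (σ ++ [true]) = 4 * ilvSum d σ := by
  rw [ilvSum_snoc, ilvSum_snoc, ← Finset.sum_add_distrib, ilvSum, Finset.mul_sum]
  refine Finset.sum_congr rfl fun τ _ => ?_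
  rw [← Finset.sum_add_distrib, sum_append_pair_eq hd]

theorem isMartingale_ilvAvg (h : IsMartingale d) : IsMartingale (ilvAvg d) := by
  obtain ⟨hnonneg, hnil, hfair⟩ := h
  refine ⟨fun σ => ?_, by simp [ilvAvg, ilvSum_nil, hnil], fun σ => ?_⟩
  · exact mul_nonneg (by positivity) (Finset.sum_nonneg fun τ _ => hnonneg _)
  · have := ilvSum_snoc_false_add_true hfair σ
    simp only [ilvAvg, List.length_append, List.length_singleton, pow_succ]
    field_simp
    linarith

end

/-- If `d_AB` is a martingale and `d_B(λ) = 1`,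
`d_B(σ) = 2^{-n} Σ_{τ ∈ Σ^n} d_AB(τ ⊎ σ)` for nonempty `σ` of length `n`
(where `τ ⊎ σ = τ₀σ₀…τ_{n-1}σ_{n-1}`), then `d_B` is a martingale. -/
theorem stmt_5 (dAB dB : List Bool → ℝ) (h : IsMartingale dAB)
    (h0 : dB [] = 1)
    (hdef : ∀ σ : List Bool, σ ≠ [] →
      dB σ = ((2 : ℝ) ^ σ.length)⁻¹ *
        ∑ v : Fin σ.length → Bool, dAB (ilv (List.ofFn v) σ)) :
    IsMartingale dB := by
  have hdB : dB = ilvAvg dAB := by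
    funext σ
    rcases eq_or_ne σ [] with rfl | hσ
    · simp [ilvAvg, ilvSum_nil, h0, h.2.1]
    · exact hdef σ hσ
  exact hdB ▸ isMartingale_ilvAvg h
end

section
/- Let d_AB be a martingale, B an infinite binary sequence, and define d_B(σ) = 2^{-|σ|} Σ_{τ: |τ|=|σ|} d_AB(τ ⊎ σ). If for every N there are infinitely many n with Σ_{σ ∈ Σ^n} d_AB(σ₀B₀…σ_{n-1}B_{n-1}) ≥ N·2^n, then limsup_n d_B(B↾n) = ∞, i.e., d_B succeeds on B. -/
def pre (X : ℕ → Bool) (n : ℕ) : List Bool := List.ofFn (fun i : Fin n => X i)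

def Succeeds (f : ℕ → ℝ) : Prop := ∀ C : ℝ, ∃ᶠ n in Filter.atTop, C < f n

theorem length_pre (X : ℕ → Bool) (n : ℕ) : (pre X n).length = n := List.length_ofFn

theorem Fintype.sum_ofFn_congr_length {α M : Type*} [Fintype α] [AddCommMonoid M] {k m : ℕ}
    (h : k = m) (f : List α → M) :
    ∑ v : Fin k → α, f (List.ofFn v) = ∑ v : Fin m → α, f (List.ofFn v) := by
  subst h; rfl

theorem stmt_6_general (dAB dB : List Bool → ℝ) (B : ℕ → Bool)
    (hdef : ∀ σ : List Bool,
      dB σ = ((2 : ℝ) ^ σ.length)⁻¹ *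
        ∑ v : Fin σ.length → Bool, dAB (ilv (List.ofFn v) σ))
    (hyp : ∀ N : ℝ, ∃ᶠ n in Filter.atTop,
      N * 2 ^ n ≤ ∑ v : Fin n → Bool, dAB (ilv (List.ofFn v) (pre B n))) :
    Succeeds (fun n => dB (pre B n)) := by
  intro C
  refine (hyp (C + 1)).mono fun n hn => ?_
  show C < dB (pre B n)
  have hdB :
      dB (pre B n) = (2 ^ n)⁻¹ * ∑ v : Fin n → Bool, dAB (ilv (List.ofFn v) (pre B n)) := by
    rw [hdef, Fintype.sum_ofFn_congr_length (length_pre B n) (fun l => dAB (ilv l (pre B n))),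
      length_pre]
  rw [hdB, inv_mul_eq_div, lt_div_iff₀ (by positivity)]
  linarith [pow_pos (two_pos : (0 : ℝ) < 2) n]

/-- Let `d_AB` be a martingale, `B` a sequence, and
`d_B(σ) = 2^{-|σ|} Σ_{|τ|=|σ|} d_AB(τ ⊎ σ)`. If for every `N` there are infinitely many
`n` with `Σ_{σ ∈ Σ^n} d_AB(σ₀B₀…σ_{n-1}B_{n-1}) ≥ N·2^n`, then
`limsup_n d_B(B↾n) = ∞`, i.e. `d_B` succeeds on `B`. -/
theorem stmt_6 (dAB dB : List Bool → ℝ) (h : IsMartingale dAB) (B : ℕ → Bool)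
    (hdef : ∀ σ : List Bool,
      dB σ = ((2 : ℝ) ^ σ.length)⁻¹ *
        ∑ v : Fin σ.length → Bool, dAB (ilv (List.ofFn v) σ))
    (hyp : ∀ N : ℝ, ∃ᶠ n in Filter.atTop,
      N * 2 ^ n ≤ ∑ v : Fin n → Bool, dAB (ilv (List.ofFn v) (pre B n))) :
    Succeeds (fun n => dB (pre B n)) :=
  stmt_6_general dAB dB B hdef hyp
end

section
/- Let L ⊆ Σ* × ℕ be a set (of 'requests') with Σ_{(σ,n) ∈ L} 2^{-n} ≤ 1. Then there exists a prefix-free set P ⊆ Σ* and a function assigning to each (σ,n) ∈ L a distinct code τ ∈ P with |τ| = n (the Kraft–Chaitin / Machine Existence theorem, combinatorial part). -/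
/-!
Sort the requests by length and allocate greedily: the `c n` requests of length `n` get the
consecutive dyadic intervals of length `2⁻ⁿ` immediately after everything allocated to shorter
lengths. Kraft's inequality says the allocation never leaves `[0, 1)`, and the `n`-bit binary
expansion of the left endpoint of the interval is the code. Since later intervals start after
all earlier ones end, no interval is contained in another, so no code is a prefix of another.
-/

open scoped ENNReal

/-- A set of strings is prefix-free if no element is a proper prefix of another. -/
def PrefixFree (S : Set (List Bool)) : Prop :=
  ∀ p ∈ S, ∀ q ∈ S, p <+: q → p = q

def binaryCode : ℕ → ℕ → List Bool
  | 0, _ => []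
  | n + 1, k => binaryCode n (k / 2) ++ [k.testBit 0]

theorem length_binaryCode : ∀ n k, (binaryCode n k).length = n
  | 0, _ => rfl
  | n + 1, k => by simp [binaryCode, length_binaryCode n]

theorem binaryCode_add (n : ℕ) :
    ∀ d j, binaryCode (n + d) j = binaryCode n (j / 2 ^ d) ++ binaryCode d j
  | 0, j => by simp [binaryCode]
  | d + 1, j => by
    rw [← add_assoc, binaryCode, binaryCode_add n d, binaryCode, Nat.div_div_eq_div_mul,
      ← pow_succ', List.append_assoc]

theorem injOn_binaryCode : ∀ n, Set.InjOn (binaryCode n) (Set.Iio (2 ^ n))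
  | 0 => fun k hk j hj _ => by simp_all
  | n + 1 => fun k hk j hj h => by
    simp only [Set.mem_Iio, pow_succ] at hk hj
    obtain ⟨hhigh, hlow⟩ := List.append_inj' h rfl
    have hhalf : k / 2 = j / 2 :=
      injOn_binaryCode n (by simp only [Set.mem_Iio]; omega) (by simp only [Set.mem_Iio]; omega)
        hhigh
    simp only [List.cons.injEq, Nat.testBit_zero, and_true, decide_eq_decide] at hlow
    omega

theorem eq_div_of_binaryCode_prefix {n m k j : ℕ} (hnm : n ≤ m) (hk : k < 2 ^ n)
    (hj : j < 2 ^ m) (h : binaryCode n k <+: binaryCode m j) : k = j / 2 ^ (m - n) := by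
  obtain ⟨d, rfl⟩ := Nat.exists_eq_add_of_le hnm
  rw [Nat.add_sub_cancel_left]
  have hhigh : binaryCode n (j / 2 ^ d) <+: binaryCode (n + d) j := by
    rw [binaryCode_add]
    exact List.prefix_append _ _
  have hlen : (binaryCode n k).length = (binaryCode n (j / 2 ^ d)).length := by
    simp only [length_binaryCode]
  refine injOn_binaryCode n hk ?_
    ((List.prefix_of_prefix_length_le h hhigh hlen.le).eq_of_length hlen)
  rw [Set.mem_Iio, Nat.div_lt_iff_lt_mul (by positivity), ← pow_add]
  exact hj

/-- The left endpoint, in units of `2⁻ⁿ`, of the block of intervals of length `2⁻ⁿ` when `c m`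
intervals of length `2⁻ᵐ` are laid out for each `m` in increasing order. -/
def kraftOffset (c : ℕ → ℕ) : ℕ → ℕ
  | 0 => 0
  | n + 1 => 2 * (kraftOffset c n + c n)

theorem two_pow_sub_mul_le_kraftOffset (c : ℕ → ℕ) {n m : ℕ} (h : n < m) :
    2 ^ (m - n) * (kraftOffset c n + c n) ≤ kraftOffset c m := by
  induction m, h using Nat.le_induction with
  | base => simp [kraftOffset]
  | succ m hnm ih =>
    rw [Nat.sub_add_comm (by omega : n ≤ m), pow_succ, kraftOffset]
    nlinarith

theorem kraftOffset_add_eq (c : ℕ → ℕ) (n : ℕ) :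
    ((kraftOffset c n + c n : ℕ) : ℝ≥0∞) =
      2 ^ n * ∑ m ∈ Finset.range (n + 1), (c m : ℝ≥0∞) * 2⁻¹ ^ m := by
  induction n with
  | zero => simp [kraftOffset]
  | succ n ih =>
    have h2 : (2 : ℝ≥0∞) ^ (n + 1) * 2⁻¹ ^ (n + 1) = 1 := by
      rw [← mul_pow, ENNReal.mul_inv_cancel two_ne_zero ENNReal.ofNat_ne_top, one_pow]
    rw [Finset.sum_range_succ, mul_add, mul_left_comm, h2, mul_one, pow_succ', mul_assoc, ← ih]
    simp [kraftOffset]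

theorem kraftOffset_add_le_two_pow {c : ℕ → ℕ} (hc : ∑' n, (c n : ℝ≥0∞) * 2⁻¹ ^ n ≤ 1) (n : ℕ) :
    kraftOffset c n + c n ≤ 2 ^ n := by
  have : ((kraftOffset c n + c n : ℕ) : ℝ≥0∞) ≤ 2 ^ n := by
    rw [kraftOffset_add_eq]
    exact mul_le_of_le_one_right' ((ENNReal.sum_le_tsum _).trans hc)
  exact_mod_cast this

/-- `⟨n, k⟩` stands for the `k`-th of the `c n` requests of length `n`. -/
def kraftCode (c : ℕ → ℕ) (y : Σ n, Fin (c n)) : List Bool :=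
  binaryCode y.1 (kraftOffset c y.1 + y.2)

theorem length_kraftCode (c : ℕ → ℕ) (y : Σ n, Fin (c n)) : (kraftCode c y).length = y.1 :=
  length_binaryCode _ _

theorem eq_of_kraftCode_prefix {c : ℕ → ℕ} (hc : ∑' n, (c n : ℝ≥0∞) * 2⁻¹ ^ n ≤ 1)
    {y z : Σ n, Fin (c n)} (h : kraftCode c y <+: kraftCode c z) : y = z := by
  obtain ⟨n, k⟩ := y
  obtain ⟨m, k'⟩ := z
  have hnm : n ≤ m := by simpa only [length_kraftCode] using h.length_le
  have hk : kraftOffset c n + k < 2 ^ n := by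
    have := kraftOffset_add_le_two_pow hc n; omega
  have hk' : kraftOffset c m + k' < 2 ^ m := by
    have := kraftOffset_add_le_two_pow hc m; omega
  have hdiv := eq_div_of_binaryCode_prefix hnm hk hk' h
  rcases hnm.lt_or_eq with hlt | rfl
  · -- the interval of `z` starts after the interval of `y` ends
    have hle := two_pow_sub_mul_le_kraftOffset c hlt
    have : kraftOffset c n + k + 1 ≤ (kraftOffset c m + k') / 2 ^ (m - n) := by
      rw [Nat.le_div_iff_mul_le (by positivity)]
      nlinarith [k.isLt]
    omega
  · obtain rfl : k = k' := Fin.ext (by simpa using hdiv)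
    rfl

theorem tsum_two_inv_pow_eq_tsum_card_fiber {ι : Type*} (ℓ : ι → ℕ) :
    ∑' i, (2 : ℝ≥0∞)⁻¹ ^ ℓ i = ∑' n, (ENat.card {i // ℓ i = n} : ℝ≥0∞) * 2⁻¹ ^ n := by
  rw [← (Equiv.sigmaFiberEquiv ℓ).tsum_eq, ENNReal.tsum_sigma']
  refine tsum_congr fun n => ?_
  rw [← ENNReal.tsum_const]
  exact tsum_congr fun i => by rw [Equiv.sigmaFiberEquiv_apply, i.2]

theorem exists_prefix_code_of_kraft {ι : Type*} (ℓ : ι → ℕ)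
    (h : ∑' i, (2 : ℝ≥0∞)⁻¹ ^ ℓ i ≤ 1) :
    ∃ F : ι → List Bool, (∀ i, (F i).length = ℓ i) ∧ ∀ i j, F i <+: F j → i = j := by
  rw [tsum_two_inv_pow_eq_tsum_card_fiber] at h
  have hfin (n : ℕ) : Finite {i // ℓ i = n} := by
    refine ENat.card_lt_top.mp (lt_of_le_of_ne le_top fun htop => ?_)
    have := (ENNReal.le_tsum n).trans h
    simp [htop, ENNReal.top_mul] at this
  set c := fun n => Nat.card {i // ℓ i = n}
  have hc : ∑' n, (c n : ℝ≥0∞) * 2⁻¹ ^ n ≤ 1 := by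
    simpa [c, ENat.card_eq_coe_natCard] using h
  let E : ι ≃ Σ n, Fin (c n) :=
    (Equiv.sigmaFiberEquiv ℓ).symm.trans (Equiv.sigmaCongrRight fun n => Finite.equivFin _)
  refine ⟨kraftCode c ∘ E, fun i => length_kraftCode c (E i), fun i j hij => ?_⟩
  exact E.injective (eq_of_kraftCode_prefix hc hij)

theorem stmt_9_general (L : Set (List Bool × ℕ))
    (hkraft : ∑' x : L, (2 : ℝ≥0∞)⁻¹ ^ (x : List Bool × ℕ).2 ≤ 1) :
    ∃ (P : Set (List Bool)) (F : L → List Bool),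
      PrefixFree P ∧ Function.Injective F ∧
      ∀ x : L, F x ∈ P ∧ (F x).length = (x : List Bool × ℕ).2 := by
  obtain ⟨F, hlen, hprefix⟩ := exists_prefix_code_of_kraft (fun x : L => x.1.2) hkraft
  refine ⟨Set.range F, F, ?_, fun x y hxy => hprefix x y (hxy ▸ List.prefix_rfl),
    fun x => ⟨Set.mem_range_self x, hlen x⟩⟩
  rintro _ ⟨x, rfl⟩ _ ⟨y, rfl⟩ hxy
  rw [hprefix x y hxy]

/-- Kraft–Chaitin / Machine Existence, combinatorial part: if
`L ⊆ Σ* × ℕ` is a countable set of requests with `Σ_{(σ,n) ∈ L} 2^{-n} ≤ 1`, then there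
is a prefix-free set `P` and an injective assignment of a code `τ ∈ P` with `|τ| = n`
to each request `(σ, n) ∈ L`. -/
theorem stmt_9 (L : Set (List Bool × ℕ)) (hc : L.Countable)
    (hkraft : ∑' x : L, (2 : ℝ≥0∞)⁻¹ ^ (x : List Bool × ℕ).2 ≤ 1) :
    ∃ (P : Set (List Bool)) (F : L → List Bool),
      PrefixFree P ∧ Function.Injective F ∧
      ∀ x : L, F x ∈ P ∧ (F x).length = (x : List Bool × ℕ).2 :=
  stmt_9_general L hkraft
end
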